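/- arXiv:1112.0698 — 5 statements merged into one kernel-verified Lean document; each statement's English description precedes it below -/
import Mathlib

section
/- Let v_1, ..., v_p be vectors in ℝⁿ with ‖v_j‖₂ ≤ b for all j, and let y = Σ_{j=1}^p γ_j v_j be a sub-convex combination (γ_j ≥ 0 for all j and Σ_j γ_j ≤ 1). Then for every positive integer K there exists a point y_K that is the average of K vectors, each taken from the set {v_1, ..., v_p, 0} (repetitions allowed), such that ‖y − y_K‖₂² ≤ b²/K. -/
open Finset

private lemma sum_prod_eval {K : ℕ} {Ω : Type*} [Fintype Ω] [DecidableEq Ω]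
    (q : Fin K → Ω → ℝ) :
    ∑ f : Fin K → Ω, ∏ u, q u (f u) = ∏ u, ∑ ω, q u ω := by
  rw [Finset.prod_univ_sum, Fintype.piFinset_univ]

private lemma E_one {K : ℕ} {Ω : Type*} [Fintype Ω] [DecidableEq Ω]
    (μ : Ω → ℝ) (hμ1 : ∑ ω, μ ω = 1) (s : Fin K) (g : Ω → ℝ) :
    ∑ f : Fin K → Ω, (∏ u, μ (f u)) * g (f s) = ∑ ω, μ ω * g ω := by
  have h1 : ∀ f : Fin K → Ω,
      (∏ u, μ (f u)) * g (f s) = ∏ u, (μ (f u) * if u = s then g (f u) else 1) := by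
    intro f
    rw [Finset.prod_mul_distrib, Finset.prod_ite_eq' Finset.univ s (fun u => g (f u))]
    simp
  simp_rw [h1]
  refine Eq.trans (sum_prod_eval fun u ω => μ ω * if u = s then g ω else 1) ?_
  have h2 : ∀ u : Fin K,
      (∑ ω, μ ω * if u = s then g ω else 1) = if u = s then ∑ ω, μ ω * g ω else 1 := by
    intro u
    by_cases h : u = s <;> simp [h, hμ1]
  simp_rw [h2]
  rw [Finset.prod_ite_eq' Finset.univ s]
  simp

private lemma E_two {K : ℕ} {Ω : Type*} [Fintype Ω] [DecidableEq Ω]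
    (μ : Ω → ℝ) (hμ1 : ∑ ω, μ ω = 1) {s t : Fin K} (hst : s ≠ t) (g h : Ω → ℝ) :
    ∑ f : Fin K → Ω, (∏ u, μ (f u)) * (g (f s) * h (f t))
      = (∑ ω, μ ω * g ω) * (∑ ω, μ ω * h ω) := by
  have h1 : ∀ f : Fin K → Ω,
      (∏ u, μ (f u)) * (g (f s) * h (f t))
        = ∏ u, (μ (f u) * (if u = s then g (f u) else 1) * (if u = t then h (f u) else 1)) := by
    intro f
    rw [Finset.prod_mul_distrib, Finset.prod_mul_distrib,
      Finset.prod_ite_eq' Finset.univ s (fun u => g (f u)),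
      Finset.prod_ite_eq' Finset.univ t (fun u => h (f u))]
    simp [mul_assoc]
  simp_rw [h1]
  refine Eq.trans (sum_prod_eval fun u ω =>
    μ ω * (if u = s then g ω else 1) * (if u = t then h ω else 1)) ?_
  have h2 : ∀ u : Fin K,
      (∑ ω, μ ω * (if u = s then g ω else 1) * (if u = t then h ω else 1))
        = (if u = s then ∑ ω, μ ω * g ω else 1) * (if u = t then ∑ ω, μ ω * h ω else 1) := by
    intro u
    by_cases hs : u = s
    · subst hs
      simp [if_neg hst, hμ1]
    · by_cases ht : u = t <;> simp [hs, ht, hμ1, Ne.symm hst]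
  simp_rw [h2]
  rw [Finset.prod_mul_distrib, Finset.prod_ite_eq' Finset.univ s,
    Finset.prod_ite_eq' Finset.univ t]
  simp

/-- Maurey's Lemma (Lemma 1 of the paper): if `y` is a sub-convex combination of vectors
`v 1, ..., v p` in `ℝⁿ`, each of Euclidean norm at most `b`, then for every positive integer
`K` there is a point `y_K` that is the average of `K` vectors, each taken (with repetition
allowed) from `{v 1, ..., v p, 0}`, with `‖y - y_K‖₂² ≤ b² / K`. -/
theorem maureys_lemma (n p : ℕ) (b : ℝ) (v : Fin p → Fin n → ℝ)
    (hv : ∀ j, Real.sqrt (∑ i, (v j i) ^ 2) ≤ b)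
    (γ : Fin p → ℝ) (hγ0 : ∀ j, 0 ≤ γ j) (hγ1 : ∑ j, γ j ≤ 1)
    (y : Fin n → ℝ) (hy : y = fun i => ∑ j, γ j * v j i)
    (K : ℕ) (hK : 0 < K) :
    ∃ w : Fin K → Fin n → ℝ,
      (∀ s, w s = 0 ∨ ∃ j, w s = v j) ∧
      ∑ i, (y i - (K : ℝ)⁻¹ * ∑ s, w s i) ^ 2 ≤ b ^ 2 / K := by
  classical
  set μ : Option (Fin p) → ℝ := fun ω => ω.elim (1 - ∑ j, γ j) γ with hμdef
  set X : Option (Fin p) → Fin n → ℝ := fun ω => ω.elim 0 v with hXdef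
  have hKne : (K : ℝ) ≠ 0 := Nat.cast_ne_zero.mpr hK.ne'
  have hμ0 : ∀ ω, 0 ≤ μ ω := by
    rintro (_ | j)
    · simp [hμdef]; linarith
    · simpa [hμdef] using hγ0 j
  have hμ1 : ∑ ω, μ ω = 1 := by
    rw [Fintype.sum_option]; simp [hμdef]
  have hmean : ∀ i, ∑ ω, μ ω * X ω i = y i := by
    intro i
    rw [Fintype.sum_option]
    simp [hμdef, hXdef, hy]
  have hcent : ∀ i, ∑ ω, μ ω * (y i - X ω i) = 0 := by
    intro i
    simp_rw [mul_sub]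
    rw [Finset.sum_sub_distrib, ← Finset.sum_mul, hμ1, hmean]
    ring
  have hsec : ∑ ω, μ ω * (∑ i, X ω i ^ 2) ≤ b ^ 2 := by
    rw [Fintype.sum_option]
    have hterm : ∀ j, γ j * (∑ i, X (some j) i ^ 2) ≤ γ j * b ^ 2 := by
      intro j
      apply mul_le_mul_of_nonneg_left _ (hγ0 j)
      have h1 : (∑ i, X (some j) i ^ 2) = Real.sqrt (∑ i, (v j i) ^ 2) ^ 2 := by
        rw [Real.sq_sqrt (Finset.sum_nonneg fun i _ => sq_nonneg _)]
        simp [hXdef]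
      rw [h1]
      exact pow_le_pow_left₀ (Real.sqrt_nonneg _) (hv j) 2
    have h2 : ∑ j, μ (some j) * (∑ i, X (some j) i ^ 2) ≤ (∑ j, γ j) * b ^ 2 := by
      rw [Finset.sum_mul]
      refine Finset.sum_le_sum fun j _ => ?_
      simpa [hμdef] using hterm j
    have h3 : (∑ j, γ j) * b ^ 2 ≤ b ^ 2 := mul_le_of_le_one_left (sq_nonneg b) hγ1
    have h0 : μ none * (∑ i, X none i ^ 2) = 0 := by simp [hXdef]
    linarith
  set P : (Fin K → Option (Fin p)) → ℝ := fun f => ∏ u, μ (f u) with hPdef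
  have hP0 : ∀ f, 0 ≤ P f := fun f => Finset.prod_nonneg fun u _ => hμ0 _
  have hPone : ∑ f : Fin K → Option (Fin p), P f = 1 := by
    rw [hPdef]
    rw [sum_prod_eval (fun _ => μ)]
    simp [hμ1]
  set V : Fin n → ℝ := fun i => ∑ ω, μ ω * (y i - X ω i) ^ 2 with hVdef
  -- expectation of each pair term
  have T : ∀ (i : Fin n) (s t : Fin K),
      (∑ f : Fin K → Option (Fin p), P f * ((y i - X (f s) i) * (y i - X (f t) i)))
        = if s = t then V i else 0 := by
    intro i s t
    by_cases hst : s = t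
    · subst hst
      rw [if_pos rfl, hVdef]
      have := E_one μ hμ1 s (fun ω => (y i - X ω i) ^ 2)
      simpa [hPdef, sq] using this
    · rw [if_neg hst]
      have := E_two μ hμ1 hst (fun ω => y i - X ω i) (fun ω => y i - X ω i)
      rw [hPdef]
      simp only [hcent i, mul_zero] at this
      exact this
  -- pointwise rewriting of the squared error
  have key : ∀ f : Fin K → Option (Fin p),
      (∑ i, (y i - (K : ℝ)⁻¹ * ∑ s, X (f s) i) ^ 2)
        = ((K : ℝ)⁻¹) ^ 2 * ∑ i, ∑ s, ∑ t, (y i - X (f s) i) * (y i - X (f t) i) := by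
    intro f
    rw [Finset.mul_sum]
    refine Finset.sum_congr rfl fun i _ => ?_
    have h1 : y i - (K : ℝ)⁻¹ * ∑ s, X (f s) i
        = (K : ℝ)⁻¹ * ∑ s : Fin K, (y i - X (f s) i) := by
      rw [Finset.sum_sub_distrib, Finset.sum_const, Finset.card_univ, Fintype.card_fin,
        nsmul_eq_mul]
      field_simp
    rw [h1, mul_pow]
    congr 1
    rw [sq, Finset.sum_mul_sum]
  -- the expectation bound
  have hE : ∑ f : Fin K → Option (Fin p),
      P f * (∑ i, (y i - (K : ℝ)⁻¹ * ∑ s, X (f s) i) ^ 2) ≤ b ^ 2 / K := by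
    have step1 : ∑ f : Fin K → Option (Fin p),
        P f * (∑ i, (y i - (K : ℝ)⁻¹ * ∑ s, X (f s) i) ^ 2)
        = ((K : ℝ)⁻¹) ^ 2 * ∑ i, ∑ s : Fin K, ∑ t : Fin K,
            ∑ f : Fin K → Option (Fin p), P f * ((y i - X (f s) i) * (y i - X (f t) i)) := by
      simp_rw [key, mul_left_comm _ (((K : ℝ)⁻¹) ^ 2)]
      rw [← Finset.mul_sum]
      congr 1
      simp_rw [Finset.mul_sum]
      rw [Finset.sum_comm]
      refine Finset.sum_congr rfl fun i _ => ?_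
      rw [Finset.sum_comm]
      refine Finset.sum_congr rfl fun s _ => ?_
      rw [Finset.sum_comm]
    rw [step1]
    have step2 : ∀ i : Fin n, (∑ s : Fin K, ∑ t : Fin K,
        ∑ f : Fin K → Option (Fin p), P f * ((y i - X (f s) i) * (y i - X (f t) i)))
        = (K : ℝ) * V i := by
      intro i
      simp_rw [T i]
      simp [Finset.sum_ite_eq, mul_comm]
    simp_rw [step2]
    rw [← Finset.mul_sum]
    have hVle : ∑ i, V i ≤ b ^ 2 := by
      have h1 : ∀ i, V i ≤ ∑ ω, μ ω * X ω i ^ 2 := by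
        intro i
        have hexp : ∀ ω, μ ω * (y i - X ω i) ^ 2
            = μ ω * y i ^ 2 - 2 * y i * (μ ω * X ω i) + μ ω * X ω i ^ 2 := by
          intro ω; ring
        rw [hVdef]
        simp only [hexp]
        rw [Finset.sum_add_distrib, Finset.sum_sub_distrib, ← Finset.sum_mul,
          ← Finset.mul_sum, hmean i, hμ1]
        nlinarith [sq_nonneg (y i)]
      calc ∑ i, V i ≤ ∑ i, ∑ ω, μ ω * X ω i ^ 2 := Finset.sum_le_sum fun i _ => h1 i
        _ = ∑ ω, μ ω * ∑ i, X ω i ^ 2 := by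
            rw [Finset.sum_comm]; simp_rw [Finset.mul_sum]
        _ ≤ b ^ 2 := hsec
    have hc : (0 : ℝ) ≤ ((K : ℝ)⁻¹) ^ 2 * (K : ℝ) := by positivity
    have : ((K : ℝ)⁻¹) ^ 2 * ((K : ℝ) * ∑ i, V i) ≤ ((K : ℝ)⁻¹) ^ 2 * ((K : ℝ) * b ^ 2) := by
      apply mul_le_mul_of_nonneg_left _ (by positivity)
      exact mul_le_mul_of_nonneg_left hVle (by positivity)
    calc ((K : ℝ)⁻¹) ^ 2 * ((K : ℝ) * ∑ i, V i)
        ≤ ((K : ℝ)⁻¹) ^ 2 * ((K : ℝ) * b ^ 2) := this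
      _ = b ^ 2 / K := by field_simp
  -- extract a good sample
  have hex : ∃ f : Fin K → Option (Fin p),
      (∑ i, (y i - (K : ℝ)⁻¹ * ∑ s, X (f s) i) ^ 2) ≤ b ^ 2 / K := by
    by_contra hc
    push_neg at hc
    obtain ⟨f0, hf0⟩ : ∃ f, 0 < P f := by
      by_contra h
      push_neg at h
      have : ∑ f : Fin K → Option (Fin p), P f ≤ 0 :=
        Finset.sum_nonpos fun f _ => h f
      linarith [hPone]
    have hlt : ∑ f : Fin K → Option (Fin p), P f * (b ^ 2 / K)
        < ∑ f : Fin K → Option (Fin p),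
            P f * (∑ i, (y i - (K : ℝ)⁻¹ * ∑ s, X (f s) i) ^ 2) := by
      refine Finset.sum_lt_sum (fun f _ => mul_le_mul_of_nonneg_left (hc f).le (hP0 f))
        ⟨f0, Finset.mem_univ _, mul_lt_mul_of_pos_left (hc f0) hf0⟩
    rw [← Finset.sum_mul, hPone, one_mul] at hlt
    linarith
  obtain ⟨f, hf⟩ := hex
  refine ⟨fun s => X (f s), fun s => ?_, hf⟩
  rcases hfs : f s with _ | j
  · left; simp [hXdef, hfs]
  · right; exact ⟨j, by simp [hXdef, hfs]⟩
end

section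
/- Let v_1, ..., v_p be vectors in ℝⁿ with ‖v_j‖₂ ≤ b for all j, and let y = Σ_{j=1}^p γ_j v_j with γ_j ≥ 0 and Σ_j γ_j ≤ 1. Then for every positive integer K there exist non-negative integers m_1, ..., m_p with Σ_{j=1}^p m_j ≤ K such that ‖y − Σ_{j=1}^p (m_j/K) v_j‖₂² ≤ b²/K. -/
/-!
Derandomized Maurey argument. Write `y` as a convex combination of the points `0, v 1, …, v p`
and build the multiplicities greedily, one point at a time, tracking the error
`d = t • y - ∑ m j • v j`. Appending a point `x` turns `d` into `d + y - x`, and averaged over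
the convex weights `‖d + y - x‖² = ‖d‖² + E ‖x‖² - ‖y‖² ≤ ‖d‖² + b²`; so some point does at
least as well, and after `K` steps `‖d‖² ≤ K b²`. Dividing by `K` gives the bound `b² / K`.
-/

open Finset

section Maurey

variable {E : Type*} [NormedAddCommGroup E] [InnerProductSpace ℝ E] {ι : Type*} [Fintype ι]

theorem exists_le_of_sum_mul_le {w f : ι → ℝ} {c : ℝ} (hw0 : ∀ i, 0 ≤ w i)
    (hw1 : ∑ i, w i = 1) (h : ∑ i, w i * f i ≤ c) : ∃ i, f i ≤ c := by
  obtain ⟨i₀, -, -⟩ := exists_ne_zero_of_sum_ne_zero (hw1 ▸ one_ne_zero : ∑ i, w i ≠ 0)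
  have : Nonempty ι := ⟨i₀⟩
  obtain ⟨i, hi⟩ := Finite.exists_min f
  refine ⟨i, ?_⟩
  calc f i = ∑ j, w j * f i := by rw [← sum_mul, hw1, one_mul]
    _ ≤ ∑ j, w j * f j := sum_le_sum fun j _ => mul_le_mul_of_nonneg_left (hi j) (hw0 j)
    _ ≤ c := h

theorem sum_mul_norm_sub_sq {w : ι → ℝ} (hw1 : ∑ i, w i = 1) (x : ι → E) (a : E) :
    ∑ i, w i * ‖a - x i‖ ^ 2
      = ‖a - ∑ i, w i • x i‖ ^ 2 + ∑ i, w i * ‖x i‖ ^ 2 - ‖∑ i, w i • x i‖ ^ 2 := by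
  have hinner : ∑ i, w i * inner ℝ a (x i) = inner ℝ a (∑ i, w i • x i) := by
    simp only [inner_sum, real_inner_smul_right]
  have hexpand : ∀ i, w i * ‖a - x i‖ ^ 2
      = w i * ‖a‖ ^ 2 - 2 * (w i * inner ℝ a (x i)) + w i * ‖x i‖ ^ 2 := fun i => by
    rw [norm_sub_sq_real]; ring
  simp only [hexpand, sum_add_distrib, sum_sub_distrib, ← sum_mul, ← mul_sum, hw1, hinner,
    norm_sub_sq_real a (∑ i, w i • x i)]
  ring

theorem exists_norm_add_sub_sq_le {w : ι → ℝ} (hw0 : ∀ i, 0 ≤ w i) (hw1 : ∑ i, w i = 1)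
    {x : ι → E} {B : ℝ} (hx : ∀ i, ‖x i‖ ^ 2 ≤ B) (d : E) :
    ∃ i, ‖d + ∑ j, w j • x j - x i‖ ^ 2 ≤ ‖d‖ ^ 2 + B := by
  refine exists_le_of_sum_mul_le hw0 hw1 ?_
  have hB : ∑ i, w i * ‖x i‖ ^ 2 ≤ B :=
    calc ∑ i, w i * ‖x i‖ ^ 2 ≤ ∑ i, w i * B :=
          sum_le_sum fun i _ => mul_le_mul_of_nonneg_left (hx i) (hw0 i)
      _ = B := by rw [← sum_mul, hw1, one_mul]
  rw [sum_mul_norm_sub_sq hw1, add_sub_cancel_right]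
  nlinarith [sq_nonneg ‖∑ i, w i • x i‖]

theorem exists_sum_eq_norm_natCast_smul_sub_sq_le {w : ι → ℝ} (hw0 : ∀ i, 0 ≤ w i)
    (hw1 : ∑ i, w i = 1) {x : ι → E} {B : ℝ} (hx : ∀ i, ‖x i‖ ^ 2 ≤ B) (t : ℕ) :
    ∃ m : ι → ℕ, ∑ i, m i = t ∧
      ‖(t : ℝ) • ∑ i, w i • x i - ∑ i, (m i : ℝ) • x i‖ ^ 2 ≤ t * B := by
  classical
  induction t with
  | zero => exact ⟨0, by simp, by simp⟩
  | succ t ih =>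
    obtain ⟨m, hm, hd⟩ := ih
    obtain ⟨i, hi⟩ := exists_norm_add_sub_sq_le hw0 hw1 hx
      ((t : ℝ) • ∑ i, w i • x i - ∑ i, (m i : ℝ) • x i)
    refine ⟨m + Pi.single i 1, by simp [sum_add_distrib, hm], ?_⟩
    have hsum : ∑ j, ((m + Pi.single i 1 : ι → ℕ) j : ℝ) • x j
        = ∑ j, (m j : ℝ) • x j + x i := by
      simp [Pi.single_apply, add_smul, sum_add_distrib]
    rw [hsum, Nat.cast_succ]
    calc ‖((t : ℝ) + 1) • ∑ j, w j • x j - (∑ j, (m j : ℝ) • x j + x i)‖ ^ 2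
        = ‖(t : ℝ) • ∑ j, w j • x j - ∑ j, (m j : ℝ) • x j + ∑ j, w j • x j - x i‖ ^ 2 := by
          congr 2; module
      _ ≤ (t + 1) * B := by linarith

theorem exists_sum_eq_norm_sub_sum_div_smul_sq_le {w : ι → ℝ} (hw0 : ∀ i, 0 ≤ w i)
    (hw1 : ∑ i, w i = 1) {x : ι → E} {B : ℝ} (hx : ∀ i, ‖x i‖ ^ 2 ≤ B) {K : ℕ} (hK : 0 < K) :
    ∃ m : ι → ℕ, ∑ i, m i = K ∧
      ‖∑ i, w i • x i - ∑ i, ((m i : ℝ) / K) • x i‖ ^ 2 ≤ B / K := by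
  obtain ⟨m, hm, hbound⟩ := exists_sum_eq_norm_natCast_smul_sub_sq_le hw0 hw1 hx K
  refine ⟨m, hm, ?_⟩
  have hK' : (0 : ℝ) < K := Nat.cast_pos.mpr hK
  have hscale : ∑ i, w i • x i - ∑ i, ((m i : ℝ) / K) • x i
      = (K : ℝ)⁻¹ • ((K : ℝ) • ∑ i, w i • x i - ∑ i, (m i : ℝ) • x i) := by
    rw [smul_sub, smul_smul, inv_mul_cancel₀ hK'.ne', one_smul, smul_sum]
    simp only [smul_smul, div_eq_inv_mul]
  calc ‖∑ i, w i • x i - ∑ i, ((m i : ℝ) / K) • x i‖ ^ 2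
      = (K : ℝ)⁻¹ ^ 2 * ‖(K : ℝ) • ∑ i, w i • x i - ∑ i, (m i : ℝ) • x i‖ ^ 2 := by
        rw [hscale, norm_smul, mul_pow, Real.norm_of_nonneg (by positivity)]
    _ ≤ (K : ℝ)⁻¹ ^ 2 * (K * B) := by gcongr
    _ = B / K := by field_simp

/-- A sub-convex combination of the `v j` is a convex combination of the `v j` and of the point
`0`, indexed by `none : Option ι`. -/
theorem exists_sum_le_norm_sub_sum_div_smul_sq_le {v : ι → E} {b : ℝ}
    (hv : ∀ j, ‖v j‖ ≤ b) {γ : ι → ℝ} (hγ0 : ∀ j, 0 ≤ γ j) (hγ1 : ∑ j, γ j ≤ 1)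
    {K : ℕ} (hK : 0 < K) :
    ∃ m : ι → ℕ, ∑ j, m j ≤ K ∧
      ‖∑ j, γ j • v j - ∑ j, ((m j : ℝ) / K) • v j‖ ^ 2 ≤ b ^ 2 / K := by
  obtain ⟨m, hm, hbound⟩ := exists_sum_eq_norm_sub_sum_div_smul_sq_le
    (w := fun o : Option ι => o.elim (1 - ∑ j, γ j) γ) (x := fun o => o.elim 0 v)
    (by rintro (_ | _) <;> simp [hγ0, hγ1]) (by simp [Fintype.sum_option])
    (B := b ^ 2)
    (by rintro (_ | _) <;> simp [sq_nonneg, pow_le_pow_left₀ (norm_nonneg _) (hv _)]) hK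
  refine ⟨fun j => m (some j), ?_, ?_⟩
  · rw [Fintype.sum_option] at hm
    exact hm ▸ Nat.le_add_left _ _
  · simpa [Fintype.sum_option] using hbound

end Maurey

/-- Corollary 1 of the paper (discretized Maurey's Lemma): every sub-convex combination `y` of
vectors `v 1, ..., v p` in `ℝⁿ` of Euclidean norm at most `b` can be approximated, for every
positive integer `K`, by `∑ j (m j / K) • v j` with non-negative integers `m j` summing to at
most `K`, with squared Euclidean error at most `b² / K`. -/
theorem maurey_corollary (n p : ℕ) (b : ℝ) (v : Fin p → Fin n → ℝ)
    (hv : ∀ j, Real.sqrt (∑ i, (v j i) ^ 2) ≤ b)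
    (γ : Fin p → ℝ) (hγ0 : ∀ j, 0 ≤ γ j) (hγ1 : ∑ j, γ j ≤ 1)
    (y : Fin n → ℝ) (hy : y = fun i => ∑ j, γ j * v j i)
    (K : ℕ) (hK : 0 < K) :
    ∃ m : Fin p → ℕ, (∑ j, m j ≤ K) ∧
      ∑ i, (y i - ∑ j, ((m j : ℝ) / K) * v j i) ^ 2 ≤ b ^ 2 / K := by
  let V : Fin p → EuclideanSpace ℝ (Fin n) := fun j => WithLp.toLp 2 (v j)
  have hV : ∀ j, ‖V j‖ ≤ b := fun j => by
    simpa [V, EuclideanSpace.norm_eq] using hv j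
  obtain ⟨m, hm, hbound⟩ := exists_sum_le_norm_sub_sum_div_smul_sq_le hV hγ0 hγ1 hK
  refine ⟨m, hm, ?_⟩
  simpa [EuclideanSpace.real_norm_sq_eq, V, hy] using hbound
end

section
/- Let v_1, ..., v_p be vectors in ℝⁿ with ‖v_j‖₂ ≤ b for all j, and let y = Σ_{j=1}^p β̃_j v_j where β̃ ∈ ℝ^p satisfies ‖β̃‖₁ ≤ 1. Then for every positive integer K there exist integers k_1, ..., k_p ∈ ℤ with Σ_{j=1}^p |k_j| ≤ K such that ‖y − Σ_{j=1}^p (k_j/K) v_j‖₂² ≤ b²/K. -/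
/-!
Derandomized Maurey argument. If `y` is a convex combination of points of norm at most `b`,
then for every vector `D` some point `s` of the combination minimizes the linear functional
`⟪D - y, ·⟫` below its value at `y`, and then
`‖D + (s - y)‖² = ‖D‖² + 2⟪D - y, s - y⟫ + ‖s‖² - ‖y‖² ≤ ‖D‖² + b²`.
Adding such points one at a time gives `m` points whose sum is within `√m b` of `m y`.
The unit `ℓ₁` ball is the convex hull of the integer vectors `0, ±eⱼ`, so applying this to the
points `∑ⱼ kⱼ vⱼ`, `k` in the integer unit `ℓ₁` ball, produces integer coefficients whose
`ℓ₁` norms add up to at most `K`.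
-/

open Set

section Maurey

variable {E : Type*} [NormedAddCommGroup E] [InnerProductSpace ℝ E]

lemma norm_add_sub_sq_eq (D s y : E) :
    ‖D + (s - y)‖ ^ 2 = ‖D‖ ^ 2 + 2 * inner ℝ (D - y) (s - y) + (‖s‖ ^ 2 - ‖y‖ ^ 2) := by
  simp only [norm_add_sq_real, norm_sub_sq_real, inner_sub_left, inner_sub_right,
    real_inner_self_eq_norm_sq, real_inner_comm s y]
  ring

lemma exists_mem_norm_add_sub_sq_le {S : Set E} {y : E} (hy : y ∈ convexHull ℝ S) {b : ℝ}
    (hS : ∀ s ∈ S, ‖s‖ ≤ b) (D : E) : ∃ s ∈ S, ‖D + (s - y)‖ ^ 2 ≤ ‖D‖ ^ 2 + b ^ 2 := by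
  obtain ⟨s, hsS, hs⟩ := ((innerₛₗ ℝ (D - y)).concaveOn
    (convex_convexHull ℝ S)).exists_le_of_mem_convexHull (subset_convexHull ℝ S) hy
  refine ⟨s, hsS, ?_⟩
  have hinner : inner ℝ (D - y) (s - y) ≤ 0 := by
    rw [inner_sub_right, sub_nonpos]; exact hs
  have hs_sq : ‖s‖ ^ 2 ≤ b ^ 2 := pow_le_pow_left₀ (norm_nonneg s) (hS s hsS) 2
  rw [norm_add_sub_sq_eq]
  nlinarith [sq_nonneg ‖y‖]

theorem exists_norm_sum_sub_smul_sq_le {ι : Type*} {f : ι → E} {y : E}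
    (hy : y ∈ convexHull ℝ (range f)) {b : ℝ} (hf : ∀ i, ‖f i‖ ≤ b) (m : ℕ) :
    ∃ x : Fin m → ι, ‖∑ i, f (x i) - (m : ℝ) • y‖ ^ 2 ≤ m * b ^ 2 := by
  induction m with
  | zero => simp
  | succ m ih =>
    obtain ⟨x, hx⟩ := ih
    obtain ⟨_, ⟨a, rfl⟩, ha⟩ := exists_mem_norm_add_sub_sq_le hy (by simpa using hf)
      (∑ i, f (x i) - (m : ℝ) • y)
    refine ⟨Fin.cons a x, ?_⟩
    have hsplit : ∑ i, f ((Fin.cons a x : Fin (m + 1) → ι) i) - ((m + 1 : ℕ) : ℝ) • y =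
        ∑ i, f (x i) - (m : ℝ) • y + (f a - y) := by
      rw [Fin.sum_univ_succ, Fin.cons_zero]; simp only [Fin.cons_succ]; push_cast; module
    rw [hsplit]; push_cast; linarith

/-- **Maurey's lemma**, in its deterministic form. -/
theorem exists_norm_sub_avg_sq_le {ι : Type*} {f : ι → E} {y : E}
    (hy : y ∈ convexHull ℝ (range f)) {b : ℝ} (hf : ∀ i, ‖f i‖ ≤ b) {m : ℕ} (hm : 0 < m) :
    ∃ x : Fin m → ι, ‖y - (m : ℝ)⁻¹ • ∑ i, f (x i)‖ ^ 2 ≤ b ^ 2 / m := by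
  obtain ⟨x, hx⟩ := exists_norm_sum_sub_smul_sq_le hy hf m
  refine ⟨x, ?_⟩
  have hm' : (0 : ℝ) < m := by exact_mod_cast hm
  have hscale : y - (m : ℝ)⁻¹ • ∑ i, f (x i) = -(m : ℝ)⁻¹ • (∑ i, f (x i) - (m : ℝ) • y) := by
    rw [smul_sub, smul_smul, neg_mul, inv_mul_cancel₀ hm'.ne']
    module
  rw [hscale, norm_smul, mul_pow, norm_neg, norm_inv, Real.norm_natCast, inv_pow,
    le_div_iff₀ hm']
  calc _ ≤ ((m : ℝ) ^ 2)⁻¹ * (m * b ^ 2) * m := by gcongr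
    _ = b ^ 2 := by field_simp

end Maurey

lemma Convex.sum_smul_mem_of_zero_mem {E ι : Type*} [AddCommGroup E] [Module ℝ E] {s : Set E}
    (hs : Convex ℝ s) (h0 : 0 ∈ s) {t : Finset ι} {w : ι → ℝ} {z : ι → E}
    (hw₀ : ∀ i ∈ t, 0 ≤ w i) (hw₁ : ∑ i ∈ t, w i ≤ 1) (hz : ∀ i ∈ t, z i ∈ s) :
    ∑ i ∈ t, w i • z i ∈ s := by
  have key := hs.sum_mem (t := t.insertNone) (w := fun o => o.elim (1 - ∑ i ∈ t, w i) w)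
    (z := fun o => o.elim 0 z) ?_ ?_ ?_
  · simpa [Finset.sum_insertNone] using key
  · rintro (_ | i) hi
    · simpa using hw₁
    · exact hw₀ i (Finset.some_mem_insertNone.1 hi)
  · simp [Finset.sum_insertNone]
  · rintro (_ | i) hi
    · exact h0
    · exact hz i (Finset.some_mem_insertNone.1 hi)

lemma sum_abs_sum_apply_le {ι κ R : Type*} [Fintype κ] [AddCommGroup R] [LinearOrder R]
    [IsOrderedAddMonoid R] (s : Finset ι) (k : ι → κ → R) :
    ∑ j, |(∑ i ∈ s, k i) j| ≤ ∑ i ∈ s, ∑ j, |k i j| := by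
  rw [Finset.sum_comm]
  exact Finset.sum_le_sum fun j _ => by
    simpa only [Finset.sum_apply] using Finset.abs_sum_le_sum_abs _ _

def intL1Ball (κ : Type*) [Fintype κ] : Set (κ → ℤ) := {k | ∑ j, |k j| ≤ 1}

section IntL1Ball

variable {κ E : Type*} [Fintype κ] [NormedAddCommGroup E] [NormedSpace ℝ E]

lemma norm_sum_smul_le_of_norm_le {V : κ → E} {b : ℝ} (hV : ∀ j, ‖V j‖ ≤ b) (c : κ → ℝ) :
    ‖∑ j, c j • V j‖ ≤ (∑ j, |c j|) * b := by
  rw [Finset.sum_mul]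
  refine (norm_sum_le _ _).trans (Finset.sum_le_sum fun j _ => ?_)
  rw [norm_smul, Real.norm_eq_abs]
  exact mul_le_mul_of_nonneg_left (hV j) (abs_nonneg _)

lemma norm_sum_intCast_smul_le {V : κ → E} {b : ℝ} (hV : ∀ j, ‖V j‖ ≤ b) (hb : 0 ≤ b)
    (k : intL1Ball κ) : ‖∑ j, (k.1 j : ℝ) • V j‖ ≤ b := by
  refine (norm_sum_smul_le_of_norm_le hV _).trans (mul_le_of_le_one_left hb ?_)
  exact_mod_cast k.2

lemma sum_smul_mem_convexHull_intL1Ball [DecidableEq κ] (V : κ → E) {β : κ → ℝ}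
    (hβ : ∑ j, |β j| ≤ 1) :
    ∑ j, β j • V j ∈ convexHull ℝ (range fun k : intL1Ball κ => ∑ j, (k.1 j : ℝ) • V j) := by
  have hzero : (0 : E) ∈ range fun k : intL1Ball κ => ∑ j, (k.1 j : ℝ) • V j :=
    ⟨⟨0, by simp [intL1Ball]⟩, by simp⟩
  have hsigned : ∀ j, (SignType.sign (β j) : ℝ) • V j ∈
      range fun k : intL1Ball κ => ∑ j, (k.1 j : ℝ) • V j := fun j =>
    ⟨⟨Pi.single j (SignType.sign (β j) : ℤ), by
      rw [intL1Ball, Set.mem_ofPred_eq, Fintype.sum_eq_single j fun i hi => by simp [hi]]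
      cases SignType.sign (β j) <;> simp⟩, by simp [Pi.single_apply]⟩
  have hsplit : ∀ j, β j • V j = |β j| • (SignType.sign (β j) : ℝ) • V j := fun j => by
    rw [smul_smul, abs_mul_sign]
  simp_rw [hsplit]
  exact (convex_convexHull ℝ _).sum_smul_mem_of_zero_mem (subset_convexHull ℝ _ hzero)
    (fun j _ => abs_nonneg _) hβ fun j _ => subset_convexHull ℝ _ (hsigned j)

end IntL1Ball

/-- Lemma 2 of the paper (Maurey's Lemma on the whole unit `ℓ₁` ball): if
`y = ∑ j β̃ j • v j` with `‖β̃‖₁ ≤ 1` and `‖v j‖₂ ≤ b` for all `j`, then for every positive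
integer `K` there are integers `k 1, ..., k p` with `∑ j |k j| ≤ K` such that
`‖y - ∑ j (k j / K) • v j‖₂² ≤ b² / K`. -/
theorem maurey_l1_ball (n p : ℕ) (b : ℝ) (v : Fin p → Fin n → ℝ)
    (hv : ∀ j, Real.sqrt (∑ i, (v j i) ^ 2) ≤ b)
    (β : Fin p → ℝ) (hβ : ∑ j, |β j| ≤ 1)
    (y : Fin n → ℝ) (hy : y = fun i => ∑ j, β j * v j i)
    (K : ℕ) (hK : 0 < K) :
    ∃ k : Fin p → ℤ, (∑ j, |k j| ≤ (K : ℤ)) ∧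
      ∑ i, (y i - ∑ j, ((k j : ℝ) / K) * v j i) ^ 2 ≤ b ^ 2 / K := by
  classical
  set V : Fin p → EuclideanSpace ℝ (Fin n) := fun j => WithLp.toLp 2 (v j)
  -- `|b|` rather than `b`: for `p = 0` nothing forces `b ≥ 0`.
  have hV : ∀ j, ‖V j‖ ≤ |b| := fun j => by
    rw [EuclideanSpace.norm_eq]; simpa [V] using (hv j).trans (le_abs_self b)
  have hyV : WithLp.toLp 2 y = ∑ j, β j • V j := by ext i; simp [hy, V]
  obtain ⟨x, hx⟩ := exists_norm_sub_avg_sq_le (hyV ▸ sum_smul_mem_convexHull_intL1Ball V hβ)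
    (norm_sum_intCast_smul_le hV (abs_nonneg b)) hK
  refine ⟨∑ i, (x i).1, ?_, ?_⟩
  · calc ∑ j, |(∑ i, (x i).1) j| ≤ ∑ i, ∑ j, |(x i).1 j| := sum_abs_sum_apply_le _ _
      _ ≤ ∑ _i : Fin K, 1 := Finset.sum_le_sum fun i _ => (x i).2
      _ = K := by simp
  · rw [sq_abs, EuclideanSpace.real_norm_sq_eq] at hx
    convert hx using 3 with i
    simp only [V, WithLp.ofLp_sub, WithLp.ofLp_smul, WithLp.ofLp_sum, Pi.sub_apply,
      Pi.smul_apply, Finset.sum_apply, smul_eq_mul, Finset.mul_sum, Finset.sum_mul, div_eq_inv_mul,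
      Int.cast_sum, mul_assoc]
    rw [Finset.sum_comm]
end

section
/- Let X̃ ∈ ℝ^{n×p} be a matrix and suppose λ > 0 satisfies ‖X̃ v‖₂² ≥ λ ‖v‖₂² for every v ∈ ℝ^p (e.g., λ is the smallest eigenvalue of X̃ᵀX̃, assumed positive). Let c̃_{jν} ∈ ℝ (j = 1..p, ν = 1..V) with Σ_j |c̃_{jν}| > 0 for each ν, and δ_ν > 0. Let b > 0, let K be a positive integer, let β̃ ∈ ℝ^p satisfy ‖β̃‖₁ ≤ 1 and Σ_j c̃_{jν} β̃_j + δ_ν ≤ 1 for all ν = 1..V, and let k ∈ ℤ^p satisfy ‖X̃β̃ − X̃(k/K)‖₂² ≤ b²/K. If K ≥ b² / ([min_{ν=1..V} δ_ν/(Σ_j |c̃_{jν}|)]² · λ), then Σ_j c̃_{jν} (k_j/K) ≤ 1 for all ν = 1..V. -/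
/-- Lemma 3 of the paper: if `λ > 0` satisfies `‖X̃v‖₂² ≥ λ‖v‖₂²` for all `v` (e.g. `λ` is
the smallest eigenvalue of `X̃ᵀX̃`, assumed positive), `β̃` lies in the unit `ℓ₁` ball and
satisfies the slackened linear constraints `∑ j c̃ ν j * β̃ j + δ ν ≤ 1`, and the integer-grid
point `k/K` approximates `β̃` in the sense `‖X̃β̃ - X̃(k/K)‖₂² ≤ b²/K`, then as soon as
`K ≥ b² / ([min_ν δ ν / ∑ j |c̃ ν j|]² ⬝ λ)`, the point `k/K` satisfies the unslackened
constraints `∑ j c̃ ν j * (k j / K) ≤ 1` for every `ν`. -/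
theorem constraint_satisfaction_of_fine_discretization
    (n p V : ℕ) (hV : 0 < V)
    (Xt : Matrix (Fin n) (Fin p) ℝ) (lam : ℝ) (hlam : 0 < lam)
    (hquad : ∀ v : Fin p → ℝ, lam * ∑ j, (v j) ^ 2 ≤ ∑ i, (Xt.mulVec v i) ^ 2)
    (ct : Fin V → Fin p → ℝ) (hct : ∀ ν, 0 < ∑ j, |ct ν j|)
    (δ : Fin V → ℝ) (hδ : ∀ ν, 0 < δ ν)
    (b : ℝ) (hb : 0 < b) (K : ℕ) (hK : 0 < K)
    (β : Fin p → ℝ) (hβ1 : ∑ j, |β j| ≤ 1)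
    (hβc : ∀ ν, ∑ j, ct ν j * β j + δ ν ≤ 1)
    (k : Fin p → ℤ)
    (hdist : ∑ i, (Xt.mulVec β i - Xt.mulVec (fun j => (k j : ℝ) / K) i) ^ 2 ≤ b ^ 2 / K)
    (hKbig : (K : ℝ) ≥ b ^ 2 / ((⨅ ν : Fin V, δ ν / ∑ j, |ct ν j|) ^ 2 * lam)) :
    ∀ ν, ∑ j, ct ν j * ((k j : ℝ) / K) ≤ 1 := by
  haveI : Nonempty (Fin V) := ⟨⟨0, hV⟩⟩
  set m : ℝ := ⨅ ν : Fin V, δ ν / ∑ j, |ct ν j| with hm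
  have hmpos : 0 < m := by
    obtain ⟨ν₀, hν₀⟩ := exists_eq_ciInf_of_finite (f := fun ν : Fin V => δ ν / ∑ j, |ct ν j|)
    rw [hm, ← hν₀]
    exact div_pos (hδ ν₀) (hct ν₀)
  have hmle : ∀ ν, m ≤ δ ν / ∑ j, |ct ν j| :=
    fun ν => ciInf_le (Set.Finite.bddBelow (Set.finite_range _)) ν
  set d : Fin p → ℝ := fun j => β j - (k j : ℝ) / K with hd
  have hKpos : (0 : ℝ) < K := by exact_mod_cast hK
  have hbK : b ^ 2 / K ≤ m ^ 2 * lam := by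
    rw [div_le_iff₀ hKpos]
    have h := (div_le_iff₀ (by positivity : (0:ℝ) < m ^ 2 * lam)).mp hKbig
    linarith
  have hXd : ∑ i, (Xt.mulVec d i) ^ 2 ≤ b ^ 2 / K := by
    have : ∀ i, Xt.mulVec d i = Xt.mulVec β i - Xt.mulVec (fun j => (k j : ℝ) / K) i := by
      intro i
      have : Xt.mulVec d = Xt.mulVec β - Xt.mulVec (fun j => (k j : ℝ) / K) := by
        rw [← Matrix.mulVec_sub]; rfl
      rw [this]; rfl
    simpa only [this] using hdist
  have hsum : ∑ j, (d j) ^ 2 ≤ m ^ 2 := by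
    have h1 := (hquad d).trans (hXd.trans hbK)
    nlinarith [hlam]
  have hdle : ∀ j, |d j| ≤ m := by
    intro j
    have h1 : (d j) ^ 2 ≤ m ^ 2 :=
      le_trans (Finset.single_le_sum (f := fun j => (d j) ^ 2)
        (fun i _ => sq_nonneg _) (Finset.mem_univ j)) hsum
    nlinarith [abs_nonneg (d j), sq_abs (d j)]
  intro ν
  have key : ∑ j, ct ν j * ((k j : ℝ) / K) ≤ ∑ j, ct ν j * β j + δ ν := by
    have h1 : ∑ j, ct ν j * ((k j : ℝ) / K) - ∑ j, ct ν j * β j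
        = ∑ j, ct ν j * (-(d j)) := by
      rw [← Finset.sum_sub_distrib]
      congr 1; ext j; simp [hd]; ring
    have h2 : ∑ j, ct ν j * (-(d j)) ≤ ∑ j, |ct ν j| * m := by
      apply Finset.sum_le_sum
      intro j _
      calc ct ν j * (-(d j)) ≤ |ct ν j * (-(d j))| := le_abs_self _
        _ = |ct ν j| * |d j| := by rw [abs_mul, abs_neg]
        _ ≤ |ct ν j| * m := by
            exact mul_le_mul_of_nonneg_left (hdle j) (abs_nonneg _)
    have h3 : ∑ j, |ct ν j| * m ≤ δ ν := by
      rw [← Finset.sum_mul]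
      have := hmle ν
      rw [le_div_iff₀ (hct ν)] at this
      linarith
    linarith
  linarith [hβc ν]
end

section
/- Assume the covering setup: n, p ≥ 1; real r with 2 ≤ r < ∞ and q = r/(r−1); X_b, B_b > 0; X ∈ ℝ^{n×p} with rows x_i satisfying ‖x_i‖_r ≤ X_b and nonzero columns h_1, ..., h_p; scaled columns h̃_j := (n^{1/r} X_b B_b / ‖h_j‖_r) h_j; constraint data c_{jν} ∈ ℝ and δ_ν > 0 (ν = 1..V) with c̃_{jν} := c_{jν} n^{1/r} X_b B_b / ‖h_j‖_r and Σ_j |c̃_{jν}| > 0 for each ν; B := {β ∈ ℝ^p : ‖β‖_q ≤ B_b and Σ_j c_{jν} β_j + δ_ν ≤ 1 for all ν}; F|S := {Xβ : β ∈ B} ⊆ ℝⁿ; for K ∈ ℕ, P^K := {k ∈ ℤ^p : Σ_j |k_j| ≤ K} and P_c^K := {k ∈ P^K : Σ_j c̃_{jν} k_j ≤ K for all ν}; X̃ := [h̃_1 ⋯ h̃_p] with smallest eigenvalue λ of X̃ᵀX̃ assumed positive. Let ε > 0, K₀ := ⌈X_b² B_b²/ε²⌉ and K := max{K₀, ⌈n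 X_b² B_b²/(λ · [min_ν δ_ν/(Σ_j |c̃_{jν}|)]²)⌉}. If ε < X_b B_b, then there exists a finite set U ⊆ ℝⁿ with cardinality at most min{|P^{K₀}|, |P_c^{K}|} such that every y ∈ F|S satisfies ‖y − u‖₂ ≤ √n ε for some u ∈ U; if ε ≥ X_b B_b, such a set U of cardinality 1 exists. In other words, the √n ε-covering number of F|S in Euclidean norm is at most min{|P^{K₀}|, |P_c^{K}|} when ε < X_b B_b and equals 1 otherwise. -/
/-!
Rescaling the `j`-th column of `X` by `n^{1/r} X_b B_b / ‖h_j‖_r` turns `F|S` into the image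
under `X̃` of part of the unit `ℓ₁` ball: by Hölder's inequality against the column norms,
`α j = β j ‖h_j‖_r / (n^{1/r} X_b B_b)` has `‖α‖₁ ≤ 1`, and `X β = X̃ α`. The columns of `X̃` have
squared Euclidean norm at most `C = n X_b² B_b²` (compare the `ℓ₂` and `ℓ_r` norms in `ℝⁿ`), so
Maurey's empirical method approximates `X̃ α` within `√(C / K)` by an average of `K` of the points
`0, ±h̃_j`, that is by `X̃ (k / K)` with `k ∈ P^K`; for `K ≥ K₀` this is at most `√n ε`.
Since `λ` bounds `X̃ᵀX̃` from below, moreover `|α j - k j / K| ≤ √(C / (K λ))`, and for the chosen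
`K` this perturbation stays within the slacks `δ ν` of the constraints, so that `k ∈ P_c^K`.
When `ε ≥ X_b B_b`, Hölder's inequality gives `|(X β)_i| ≤ X_b B_b`, and `{0}` is a cover.
-/

/-- The `ℓ_r` norm of a finite real vector, `(∑ i |v i|^r)^(1/r)`. -/
noncomputable def lpNorm {ι : Type*} [Fintype ι] (r : ℝ) (v : ι → ℝ) : ℝ :=
  (∑ i, |v i| ^ r) ^ (1 / r)

open Finset Matrix

section lpNorm

variable {ι : Type*} [Fintype ι] {r q : ℝ}

theorem lpNorm_nonneg (r : ℝ) (v : ι → ℝ) : 0 ≤ lpNorm r v :=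
  Real.rpow_nonneg (sum_nonneg fun _ _ => Real.rpow_nonneg (abs_nonneg _) r) _

theorem lpNorm_pos {v : ι → ℝ} (hv : v ≠ 0) : 0 < lpNorm r v := by
  obtain ⟨i, hi⟩ := Function.ne_iff.1 hv
  refine Real.rpow_pos_of_pos (sum_pos' (fun _ _ => Real.rpow_nonneg (abs_nonneg _) r)
    ⟨i, mem_univ i, ?_⟩) _
  exact Real.rpow_pos_of_pos (abs_pos.2 hi) r

theorem lpNorm_rpow (hr : r ≠ 0) (v : ι → ℝ) : lpNorm r v ^ r = ∑ i, |v i| ^ r := by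
  rw [lpNorm, ← Real.rpow_mul (sum_nonneg fun _ _ => Real.rpow_nonneg (abs_nonneg _) r),
    one_div, inv_mul_cancel₀ hr, Real.rpow_one]

theorem sum_abs_mul_abs_le_lpNorm_mul_lpNorm (hrq : r.HolderConjugate q) (a b : ι → ℝ) :
    ∑ j, |a j| * |b j| ≤ lpNorm r a * lpNorm q b := by
  simpa [lpNorm] using Real.inner_le_Lp_mul_Lq univ (fun j => |a j|) (fun j => |b j|) hrq

theorem sum_sq_le_card_rpow_mul_lpNorm_sq (hr : 2 ≤ r) (v : ι → ℝ) :
    ∑ i, v i ^ 2 ≤ (Fintype.card ι : ℝ) ^ (1 - 2 / r) * lpNorm r v ^ 2 := by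
  have hS : 0 ≤ ∑ i, |v i| ^ r := sum_nonneg fun _ _ => Real.rpow_nonneg (abs_nonneg _) r
  have hpow : ∀ i, (v i ^ 2) ^ (r / 2) = |v i| ^ r := fun i => by
    rw [← sq_abs, ← Real.rpow_natCast, ← Real.rpow_mul (abs_nonneg _)]
    congr 1; push_cast; ring
  have hmean := Real.rpow_sum_le_const_mul_sum_rpow univ (fun i => v i ^ 2)
    (p := r / 2) (by linarith)
  simp only [abs_sq, hpow, card_univ] at hmean
  calc ∑ i, v i ^ 2 = ((∑ i, v i ^ 2) ^ (r / 2)) ^ (2 / r) := by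
        rw [← Real.rpow_mul (sum_nonneg fun _ _ => sq_nonneg _)]
        field_simp
        simp
    _ ≤ ((Fintype.card ι : ℝ) ^ (r / 2 - 1) * ∑ i, |v i| ^ r) ^ (2 / r) := by
        gcongr
    _ = (Fintype.card ι : ℝ) ^ (1 - 2 / r) * lpNorm r v ^ 2 := by
        rw [Real.mul_rpow (by positivity) hS, ← Real.rpow_mul (by positivity), lpNorm,
          ← Real.rpow_natCast, ← Real.rpow_mul hS]
        congr 2 <;> field_simp
        norm_num

end lpNorm

section Rescaling

variable {ι : Type*} [Fintype ι] {r q : ℝ}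

theorem lpNorm_lpNorm_col_le {m : Type*} [Fintype m] (hr : 0 < r) (X : Matrix m ι ℝ) {C : ℝ}
    (hC : 0 ≤ C) (hrow : ∀ i, lpNorm r (X i) ≤ C) :
    lpNorm r (fun j => lpNorm r fun i => X i j) ≤ (Fintype.card m : ℝ) ^ (1 / r) * C := by
  rw [← Real.rpow_le_rpow_iff (lpNorm_nonneg _ _) (by positivity) hr, lpNorm_rpow hr.ne',
    Real.mul_rpow (by positivity) hC, ← Real.rpow_mul (by positivity), one_div_mul_cancel hr.ne',
    Real.rpow_one]
  calc ∑ j, |lpNorm r fun i => X i j| ^ r = ∑ i, lpNorm r (X i) ^ r := by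
        simp only [abs_of_nonneg (lpNorm_nonneg _ _), lpNorm_rpow hr.ne']
        exact sum_comm
    _ ≤ ∑ _i : m, C ^ r :=
        sum_le_sum fun i _ => Real.rpow_le_rpow (lpNorm_nonneg _ _) (hrow i) hr.le
    _ = Fintype.card m * C ^ r := by simp

/-- Hölder's inequality against the vector of column norms, whose `ℓ_r` norm is that of the
vector of row norms. -/
theorem sum_lpNorm_col_mul_abs_le {m : Type*} [Fintype m] (hrq : r.HolderConjugate q)
    (X : Matrix m ι ℝ) {Xb Bb : ℝ} (hXb : 0 ≤ Xb) (hrow : ∀ i, lpNorm r (X i) ≤ Xb)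
    {β : ι → ℝ} (hβ : lpNorm q β ≤ Bb) :
    ∑ j, lpNorm r (fun i => X i j) * |β j| ≤ (Fintype.card m : ℝ) ^ (1 / r) * Xb * Bb := by
  calc ∑ j, lpNorm r (fun i => X i j) * |β j|
      = ∑ j, |lpNorm r fun i => X i j| * |β j| := by
        simp only [abs_of_nonneg (lpNorm_nonneg _ _)]
    _ ≤ lpNorm r (fun j => lpNorm r fun i => X i j) * lpNorm q β :=
        sum_abs_mul_abs_le_lpNorm_mul_lpNorm hrq _ _
    _ ≤ (Fintype.card m : ℝ) ^ (1 / r) * Xb * Bb :=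
        mul_le_mul (lpNorm_lpNorm_col_le hrq.pos X hXb hrow) hβ (lpNorm_nonneg _ _)
          (by positivity)

theorem sum_sq_rpow_mul_div_lpNorm_mul_le (hr : 2 ≤ r) {v : ι → ℝ} (hv : v ≠ 0) (a : ℝ) :
    ∑ i, ((Fintype.card ι : ℝ) ^ (1 / r) * a / lpNorm r v * v i) ^ 2
      ≤ Fintype.card ι * a ^ 2 := by
  have hL := lpNorm_pos (r := r) hv
  calc ∑ i, ((Fintype.card ι : ℝ) ^ (1 / r) * a / lpNorm r v * v i) ^ 2
      = ((Fintype.card ι : ℝ) ^ (1 / r) * a / lpNorm r v) ^ 2 * ∑ i, v i ^ 2 := by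
        simp only [mul_pow, mul_sum]
    _ ≤ ((Fintype.card ι : ℝ) ^ (1 / r) * a / lpNorm r v) ^ 2
          * ((Fintype.card ι : ℝ) ^ (1 - 2 / r) * lpNorm r v ^ 2) := by
        gcongr
        exact sum_sq_le_card_rpow_mul_lpNorm_sq hr v
    _ = ((Fintype.card ι : ℝ) ^ (1 / r)) ^ 2 * (Fintype.card ι : ℝ) ^ (1 - 2 / r) * a ^ 2 := by
        field_simp
    _ = Fintype.card ι * a ^ 2 := by
        have h1 : 1 / r * (2 : ℕ) + (1 - 2 / r) = 1 := by ring
        rw [← Real.rpow_natCast, ← Real.rpow_mul (by positivity),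
          ← Real.rpow_add' (by positivity) (by rw [h1]; norm_num), h1, Real.rpow_one]

theorem sum_sq_col_le {n : ℕ} {κ : Type*} (hr : 2 ≤ r) {X : Matrix (Fin n) κ ℝ}
    (hcolne : ∀ j, (fun i => X i j) ≠ 0) {Xb Bb : ℝ} {Xt : Matrix (Fin n) κ ℝ}
    (hXt : ∀ i j, Xt i j = (n : ℝ) ^ (1 / r) * Xb * Bb / lpNorm r (fun i' => X i' j) * X i j)
    (j : κ) : ∑ i, Xt i j ^ 2 ≤ n * Xb ^ 2 * Bb ^ 2 := by
  have h := sum_sq_rpow_mul_div_lpNorm_mul_le hr (hcolne j) (Xb * Bb)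
  simp only [Fintype.card_fin, ← mul_assoc] at h
  simpa only [hXt, mul_pow, mul_assoc] using h

theorem sum_sq_mulVec_le {m : Type*} [Fintype m] (hrq : r.HolderConjugate q)
    (X : Matrix m ι ℝ) {Xb Bb : ℝ} (hrow : ∀ i, lpNorm r (X i) ≤ Xb) {β : ι → ℝ}
    (hβ : lpNorm q β ≤ Bb) :
    ∑ i, (X *ᵥ β) i ^ 2 ≤ Fintype.card m * (Xb * Bb) ^ 2 := by
  have hentry : ∀ i, |(X *ᵥ β) i| ≤ Xb * Bb := fun i =>
    calc |(X *ᵥ β) i| ≤ ∑ j, |X i j| * |β j| :=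
          (abs_sum_le_sum_abs _ _).trans_eq (by simp only [abs_mul])
      _ ≤ lpNorm r (X i) * lpNorm q β := sum_abs_mul_abs_le_lpNorm_mul_lpNorm hrq _ _
      _ ≤ Xb * Bb := mul_le_mul (hrow i) hβ (lpNorm_nonneg _ _)
          ((lpNorm_nonneg _ _).trans (hrow i))
  calc ∑ i, (X *ᵥ β) i ^ 2 ≤ ∑ _i : m, (Xb * Bb) ^ 2 :=
        sum_le_sum fun i _ => sq_le_sq' (abs_le.1 (hentry i)).1 (abs_le.1 (hentry i)).2
    _ = Fintype.card m * (Xb * Bb) ^ 2 := by simp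

/-- The witness is `α j = β j ‖h_j‖_r / (n^{1/r} X_b B_b)`. -/
theorem exists_sum_abs_le_one_mulVec_eq {n : ℕ} (hn : 1 ≤ n) {V : Type*}
    (hrq : r.HolderConjugate q) {Xb Bb : ℝ} (hXb : 0 < Xb) (hBb : 0 < Bb)
    {X : Matrix (Fin n) ι ℝ} (hrow : ∀ i, lpNorm r (X i) ≤ Xb)
    (hcolne : ∀ j, (fun i => X i j) ≠ 0) {Xt : Matrix (Fin n) ι ℝ}
    (hXt : ∀ i j, Xt i j = (n : ℝ) ^ (1 / r) * Xb * Bb / lpNorm r (fun i' => X i' j) * X i j)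
    {c ct : V → ι → ℝ}
    (hct : ∀ ν j, ct ν j = c ν j * ((n : ℝ) ^ (1 / r) * Xb * Bb) / lpNorm r (fun i => X i j))
    {β : ι → ℝ} (hβ : lpNorm q β ≤ Bb) :
    ∃ α : ι → ℝ, ∑ j, |α j| ≤ 1 ∧ X *ᵥ β = Xt *ᵥ α ∧
      ∀ ν, ∑ j, ct ν j * α j = ∑ j, c ν j * β j := by
  set N := (n : ℝ) ^ (1 / r) * Xb * Bb
  have hN : 0 < N := by
    have : (0 : ℝ) < n := by exact_mod_cast hn
    positivity
  have hL : ∀ j, lpNorm r (fun i => X i j) ≠ 0 := fun j => (lpNorm_pos (hcolne j)).ne'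
  refine ⟨fun j => β j * lpNorm r (fun i => X i j) / N, ?_, ?_, fun ν => ?_⟩
  · have hsum := sum_lpNorm_col_mul_abs_le hrq X hXb.le hrow hβ
    rw [Fintype.card_fin] at hsum
    simp only [abs_div, abs_mul, abs_of_pos hN, abs_of_nonneg (lpNorm_nonneg _ _), ← sum_div]
    rw [div_le_one hN]
    simpa only [mul_comm (|β _|)] using hsum
  · ext i
    simp only [mulVec, dotProduct, hXt]
    exact sum_congr rfl fun j _ => by field_simp [hL j]
  · exact sum_congr rfl fun j _ => by rw [hct]; field_simp [hL j]

end Rescaling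

section Maurey

variable {E : Type*} [NormedAddCommGroup E] [InnerProductSpace ℝ E] {σ : Type*} [Fintype σ]
  {w : σ → ℝ} {u : σ → E} {C : ℝ}

theorem exists_le_sum_mul_of_sum_eq_one {F : σ → ℝ} (hw0 : ∀ s, 0 ≤ w s) (hw : ∑ s, w s = 1) :
    ∃ s, F s ≤ ∑ t, w t * F t := by
  have : Nonempty σ := by
    by_contra! h
    simp at hw
  obtain ⟨s, hs⟩ := Finite.exists_min F
  refine ⟨s, ?_⟩
  calc F s = ∑ t, w t * F s := by rw [← sum_mul, hw, one_mul]
    _ ≤ ∑ t, w t * F t := sum_le_sum fun t _ => mul_le_mul_of_nonneg_left (hs t) (hw0 t)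

/-- Averaged over `s` with the weights `w`, the cross term vanishes and what remains is
`∑ w s ‖u s‖² - ‖y‖² ≤ C`, where `y` is the barycentre. -/
theorem exists_norm_add_sub_sq_le_s9 (hw0 : ∀ s, 0 ≤ w s) (hw : ∑ s, w s = 1)
    (hu : ∀ s, ‖u s‖ ^ 2 ≤ C) (v : E) :
    ∃ s, ‖v + (u s - ∑ t, w t • u t)‖ ^ 2 ≤ ‖v‖ ^ 2 + C := by
  set y := ∑ t, w t • u t
  obtain ⟨s, hs⟩ := exists_le_sum_mul_of_sum_eq_one (F := fun t => ‖v + (u t - y)‖ ^ 2) hw0 hw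
  refine ⟨s, hs.trans ?_⟩
  have hC : ∑ t, w t * ‖u t‖ ^ 2 ≤ C := by
    calc ∑ t, w t * ‖u t‖ ^ 2 ≤ ∑ t, w t * C :=
          sum_le_sum fun t _ => mul_le_mul_of_nonneg_left (hu t) (hw0 t)
      _ = C := by rw [← sum_mul, hw, one_mul]
  have hcross : ∑ t, w t * (2 * inner ℝ (v - y) (u t)) = 2 * inner ℝ (v - y) y := by
    simp only [y, inner_sum, inner_smul_right, mul_sum]
    exact sum_congr rfl fun t _ => by ring
  have hexp : ∑ t, w t * ‖v + (u t - y)‖ ^ 2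
      = ‖v‖ ^ 2 - ‖y‖ ^ 2 + ∑ t, w t * ‖u t‖ ^ 2 := by
    have : ∀ t, ‖v + (u t - y)‖ ^ 2 = ‖v - y‖ ^ 2 + 2 * inner ℝ (v - y) (u t) + ‖u t‖ ^ 2 := by
      intro t
      rw [← norm_add_sq_real]; congr 2; abel
    simp only [this, mul_add, sum_add_distrib, ← sum_mul, hw, one_mul, hcross]
    rw [norm_sub_sq_real, inner_sub_left, real_inner_self_eq_norm_sq]
    ring
  nlinarith [hexp, norm_nonneg y]

/-- Maurey's empirical method, derandomised: the `K` points are chosen greedily, one at a time. -/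
theorem exists_nat_sum_eq_norm_sum_smul_sub_sq_le (hw0 : ∀ s, 0 ≤ w s) (hw : ∑ s, w s = 1)
    (hu : ∀ s, ‖u s‖ ^ 2 ≤ C) (K : ℕ) :
    ∃ m : σ → ℕ, ∑ s, m s = K ∧
      ‖∑ s, (m s : ℝ) • u s - (K : ℝ) • ∑ s, w s • u s‖ ^ 2 ≤ K * C := by
  classical
  induction K with
  | zero => exact ⟨0, by simp, by simp⟩
  | succ K ih =>
    obtain ⟨m, hm, hmC⟩ := ih
    obtain ⟨s, hs⟩ := exists_norm_add_sub_sq_le_s9 hw0 hw hu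
      (∑ s, (m s : ℝ) • u s - (K : ℝ) • ∑ s, w s • u s)
    refine ⟨m + Pi.single s 1, by simp [sum_add_distrib, hm], ?_⟩
    have hsum : ∑ t, ((m t + (Pi.single s 1 : σ → ℕ) t : ℕ) : ℝ) • u t
        = ∑ t, (m t : ℝ) • u t + u s := by
      simp [add_smul, sum_add_distrib, Pi.single_apply, ite_smul]
    simp only [Pi.add_apply]
    rw [hsum]
    calc _ = ‖∑ s, (m s : ℝ) • u s - (K : ℝ) • ∑ s, w s • u s + (u s - ∑ t, w t • u t)‖ ^ 2 := by
          congr 2; push_cast; rw [add_smul, one_smul]; abel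
      _ ≤ K * C + C := hs.trans (by linarith)
      _ = (K + 1 : ℕ) * C := by push_cast; ring

end Maurey

section L1Ball

variable {E : Type*} [NormedAddCommGroup E] [InnerProductSpace ℝ E] {ι : Type*} [Fintype ι]

/-- Maurey's method applied to the points `0`, `h j`, `-h j` with the weights `1 - ∑ |α j|`,
`(α j)⁺`, `(α j)⁻`. -/
theorem exists_int_sum_abs_le_norm_sum_smul_sub_smul_sq_le {h : ι → E} {C : ℝ} (hC : 0 ≤ C)
    (hh : ∀ j, ‖h j‖ ^ 2 ≤ C) {α : ι → ℝ} (hα : ∑ j, |α j| ≤ 1) (K : ℕ) :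
    ∃ k : ι → ℤ, ∑ j, |k j| ≤ K ∧
      ‖∑ j, (k j : ℝ) • h j - (K : ℝ) • ∑ j, α j • h j‖ ^ 2 ≤ K * C := by
  let u : Option (ι ⊕ ι) → E := fun s => s.elim 0 (Sum.elim h (-h))
  let w : Option (ι ⊕ ι) → ℝ := fun s =>
    s.elim (1 - ∑ j, |α j|) (Sum.elim (fun j => (α j)⁺) (fun j => (α j)⁻))
  have hw0 : ∀ s, 0 ≤ w s := by
    rintro (_ | _ | _)
    exacts [sub_nonneg.2 hα, posPart_nonneg _, negPart_nonneg _]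
  have hw : ∑ s, w s = 1 := by
    simp [w, Fintype.sum_option, Fintype.sum_sum_type, ← sum_add_distrib, posPart_add_negPart]
  have hu : ∀ s, ‖u s‖ ^ 2 ≤ C := by
    rintro (_ | _ | _)
    exacts [by simpa [u] using hC, hh _, by simpa [u] using hh _]
  have hbary : ∑ s, w s • u s = ∑ j, α j • h j := by
    simp only [u, w, Fintype.sum_option, Option.elim, Fintype.sum_sum_type, Sum.elim_inl,
      Sum.elim_inr, Pi.neg_apply, smul_zero, zero_add, smul_neg, sum_neg_distrib, ← sub_eq_add_neg,
      ← sum_sub_distrib, ← sub_smul, posPart_sub_negPart]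
  obtain ⟨m, hm, hmC⟩ := exists_nat_sum_eq_norm_sum_smul_sub_sq_le hw0 hw hu K
  let k : ι → ℤ := fun j => m (some (.inl j)) - m (some (.inr j))
  have hk : ∑ s, (m s : ℝ) • u s = ∑ j, (k j : ℝ) • h j := by
    simp only [u, k, Fintype.sum_option, Option.elim, Fintype.sum_sum_type, Sum.elim_inl,
      Sum.elim_inr, Pi.neg_apply, smul_zero, zero_add, smul_neg, sum_neg_distrib, ← sub_eq_add_neg,
      ← sum_sub_distrib, ← sub_smul, Int.cast_sub, Int.cast_natCast]
  refine ⟨k, ?_, by rwa [hk, hbary] at hmC⟩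
  calc ∑ j, |k j| ≤ ∑ j, ((m (some (.inl j)) + m (some (.inr j)) : ℕ) : ℤ) :=
        sum_le_sum fun j _ => by
          push_cast
          exact (abs_sub _ _).trans_eq (by simp)
    _ ≤ ((m none + ∑ j, (m (some (.inl j)) + m (some (.inr j))) : ℕ) : ℤ) := by
        push_cast; linarith [Int.natCast_nonneg (m none)]
    _ = K := by rw [← hm, Fintype.sum_option, Fintype.sum_sum_type, sum_add_distrib]

theorem exists_int_sum_abs_le_norm_sum_smul_sub_sq_le {h : ι → E} {C : ℝ} (hC : 0 ≤ C)
    (hh : ∀ j, ‖h j‖ ^ 2 ≤ C) {α : ι → ℝ} (hα : ∑ j, |α j| ≤ 1) {K : ℕ} (hK : 0 < K) :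
    ∃ k : ι → ℤ, ∑ j, |k j| ≤ K ∧
      ‖∑ j, α j • h j - ∑ j, ((k j : ℝ) / K) • h j‖ ^ 2 ≤ C / K := by
  obtain ⟨k, hk, hkC⟩ := exists_int_sum_abs_le_norm_sum_smul_sub_smul_sq_le hC hh hα K
  refine ⟨k, hk, ?_⟩
  have hK' : (0 : ℝ) < K := by exact_mod_cast hK
  have hdiv : ∑ j, ((k j : ℝ) / K) • h j = (K : ℝ)⁻¹ • ∑ j, (k j : ℝ) • h j := by
    simp_rw [smul_sum, smul_smul, div_eq_inv_mul]
  have hdiff : ∑ j, α j • h j - ∑ j, ((k j : ℝ) / K) • h j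
      = -(K : ℝ)⁻¹ • (∑ j, (k j : ℝ) • h j - (K : ℝ) • ∑ j, α j • h j) := by
    rw [hdiv, smul_sub, smul_smul, neg_mul, inv_mul_cancel₀ hK'.ne']
    module
  rw [hdiff, norm_smul, mul_pow, norm_neg, norm_inv, Real.norm_natCast, div_eq_inv_mul]
  calc (K : ℝ)⁻¹ ^ 2 * _ ≤ (K : ℝ)⁻¹ ^ 2 * (K * C) := by gcongr
    _ = (K : ℝ)⁻¹ * C := by field_simp

theorem Matrix.exists_int_sum_abs_le_sum_sq_mulVec_sub_le {m : Type*} [Fintype m]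
    (H : Matrix m ι ℝ) {C : ℝ} (hC : 0 ≤ C) (hH : ∀ j, ∑ i, H i j ^ 2 ≤ C) {α : ι → ℝ}
    (hα : ∑ j, |α j| ≤ 1) {K : ℕ} (hK : 0 < K) :
    ∃ k : ι → ℤ, ∑ j, |k j| ≤ K ∧
      ∑ i, ((H *ᵥ α) i - (H *ᵥ fun j => (k j : ℝ) / K) i) ^ 2 ≤ C / K := by
  have hcol : ∀ a : ι → ℝ,
      ∑ j, a j • WithLp.toLp 2 (fun i => H i j) = WithLp.toLp 2 (H *ᵥ a) := by
    intro a
    ext i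
    simp [Matrix.mulVec, dotProduct, mul_comm]
  obtain ⟨k, hk, hkC⟩ := exists_int_sum_abs_le_norm_sum_smul_sub_sq_le hC
    (h := fun j => WithLp.toLp 2 (fun i => H i j))
    (fun j => by simpa [EuclideanSpace.real_norm_sq_eq] using hH j) hα hK
  refine ⟨k, hk, ?_⟩
  rwa [hcol, hcol, ← WithLp.toLp_sub, EuclideanSpace.real_norm_sq_eq] at hkC

end L1Ball

section Constraints

variable {ι : Type*} [Fintype ι]

theorem sum_mul_le_add_of_sum_sq_mulVec_sub_le {m : Type*} [Fintype m] (H : Matrix m ι ℝ)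
    {lam : ℝ} (hlam : 0 < lam) (hquad : ∀ v : ι → ℝ, lam * ∑ j, v j ^ 2 ≤ ∑ i, (H *ᵥ v) i ^ 2)
    {a b : ι → ℝ} {e : ℝ} (h : ∑ i, ((H *ᵥ a) i - (H *ᵥ b) i) ^ 2 ≤ e) (c : ι → ℝ) :
    ∑ j, c j * b j ≤ ∑ j, c j * a j + (∑ j, |c j|) * √(e / lam) := by
  have hsq : ∑ j, (a j - b j) ^ 2 ≤ e / lam := by
    rw [le_div_iff₀' hlam]
    simpa using (hquad (a - b)).trans (by simpa [mulVec_sub] using h)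
  have habs : ∀ j, |a j - b j| ≤ √(e / lam) := fun j =>
    Real.abs_le_sqrt ((single_le_sum (f := fun j => (a j - b j) ^ 2)
      (fun _ _ => sq_nonneg _) (mem_univ j)).trans hsq)
  rw [sum_mul, ← sub_le_iff_le_add', ← sum_sub_distrib]
  calc ∑ j, (c j * b j - c j * a j) ≤ ∑ j, |c j| * |a j - b j| :=
        sum_le_sum fun j _ => by
          rw [← abs_mul, ← abs_neg]
          exact (le_abs_self _).trans_eq' (by ring)
    _ ≤ ∑ j, |c j| * √(e / lam) :=
        sum_le_sum fun j _ => mul_le_mul_of_nonneg_left (habs j) (abs_nonneg _)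

theorem div_le_of_natCeil_div_le {a b : ℝ} (hb : 0 < b) {K : ℕ} (hK : ⌈a / b⌉₊ ≤ K) :
    a / K ≤ b := by
  rcases K.eq_zero_or_pos with rfl | hK0
  · simpa using hb.le
  rw [div_le_iff₀' (by exact_mod_cast hK0)]
  exact (div_le_iff₀ hb).1 ((Nat.le_ceil _).trans (by exact_mod_cast hK))

theorem mul_sqrt_le_of_natCeil_div_iInf_le {V : Type*} [Finite V] {δ b : V → ℝ}
    (hδ : ∀ ν, 0 < δ ν) (hb : ∀ ν, 0 < b ν) {C lam : ℝ} (hlam : 0 < lam) {K : ℕ}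
    (hK : ⌈C / (lam * (⨅ ν, δ ν / b ν) ^ 2)⌉₊ ≤ K) (ν : V) :
    b ν * √(C / K / lam) ≤ δ ν := by
  have : Nonempty V := ⟨ν⟩
  obtain ⟨ν₀, hν₀⟩ := exists_eq_ciInf_of_finite (f := fun ν => δ ν / b ν)
  set I := ⨅ ν, δ ν / b ν
  have hI : 0 < I := by
    rw [← hν₀]
    exact div_pos (hδ ν₀) (hb ν₀)
  have hsqrt : √(C / K / lam) ≤ I := by
    rw [Real.sqrt_le_left hI.le, div_le_iff₀' hlam]
    exact div_le_of_natCeil_div_le (by positivity) hK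
  calc b ν * √(C / K / lam) ≤ b ν * (δ ν / b ν) :=
        mul_le_mul_of_nonneg_left (hsqrt.trans (ciInf_le (Set.finite_range _).bddBelow ν))
          (hb ν).le
    _ = δ ν := mul_div_cancel₀ _ (hb ν).ne'

theorem Matrix.exists_int_sum_abs_le_sum_mul_le_sum_sq_mulVec_sub_le {m V : Type*} [Fintype m]
    (H : Matrix m ι ℝ) {C : ℝ} (hC : 0 ≤ C) (hH : ∀ j, ∑ i, H i j ^ 2 ≤ C) {lam : ℝ}
    (hlam : 0 < lam) (hquad : ∀ v : ι → ℝ, lam * ∑ j, v j ^ 2 ≤ ∑ i, (H *ᵥ v) i ^ 2)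
    {ct : V → ι → ℝ} {δ : V → ℝ} {α : ι → ℝ} (hα : ∑ j, |α j| ≤ 1)
    (hcons : ∀ ν, ∑ j, ct ν j * α j + δ ν ≤ 1) {K : ℕ} (hK : 0 < K)
    (hslack : ∀ ν, (∑ j, |ct ν j|) * √(C / K / lam) ≤ δ ν) :
    ∃ k : ι → ℤ, (∑ j, |k j| ≤ K ∧ ∀ ν, ∑ j, ct ν j * (k j : ℝ) ≤ K) ∧
      ∑ i, ((H *ᵥ α) i - (H *ᵥ fun j => (k j : ℝ) / K) i) ^ 2 ≤ C / K := by
  obtain ⟨k, hk, hkC⟩ := H.exists_int_sum_abs_le_sum_sq_mulVec_sub_le hC hH hα hK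
  refine ⟨k, ⟨hk, fun ν => ?_⟩, hkC⟩
  have hν := sum_mul_le_add_of_sum_sq_mulVec_sub_le H hlam hquad hkC (ct ν)
  have hscale : ∑ j, ct ν j * (k j : ℝ) = K * ∑ j, ct ν j * ((k j : ℝ) / K) := by
    rw [mul_sum]
    exact sum_congr rfl fun j _ => by field_simp
  rw [hscale]
  nlinarith [hcons ν, hslack ν]

end Constraints

section Covering

theorem finite_setOf_sum_abs_le {ι : Type*} [Fintype ι] (K : ℕ) :
    {k : ι → ℤ | ∑ j, |k j| ≤ K}.Finite := by
  refine (Set.Finite.pi (t := fun _ => Set.Icc (-(K : ℤ)) K) fun _ => Set.finite_Icc _ _).subset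
    fun k hk j _ => abs_le.1 ?_
  exact (single_le_sum (f := fun j => |k j|) (fun _ _ => abs_nonneg _) (mem_univ j)).trans hk

theorem exists_finset_card_le_ncard_of_forall_exists {α β γ : Type*} {S : Set α}
    (hS : S.Finite) (f : α → β) {T : Set γ} {R : γ → β → Prop}
    (h : ∀ y ∈ T, ∃ k ∈ S, R y (f k)) :
    ∃ U : Finset β, U.card ≤ S.ncard ∧ ∀ y ∈ T, ∃ u ∈ U, R y u := by
  classical
  refine ⟨hS.toFinset.image f, card_image_le.trans (Set.ncard_eq_toFinset_card S hS).ge,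
    fun y hy => ?_⟩
  obtain ⟨k, hk, hR⟩ := h y hy
  exact ⟨f k, mem_image_of_mem f (hS.mem_toFinset.2 hk), hR⟩


theorem Matrix.exists_lattice_cover_of_sum_abs_le_one {m ι V : Type*} [Fintype m] [Fintype ι]
    (H : Matrix m ι ℝ) {C : ℝ} (hC : 0 ≤ C) (hH : ∀ j, ∑ i, H i j ^ 2 ≤ C) {lam : ℝ}
    (hlam : 0 < lam) (hquad : ∀ v : ι → ℝ, lam * ∑ j, v j ^ 2 ≤ ∑ i, (H *ᵥ v) i ^ 2)
    {ct : V → ι → ℝ} {δ : V → ℝ} {T : Set (m → ℝ)}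
    (hT : ∀ y ∈ T, ∃ α, ∑ j, |α j| ≤ 1 ∧ (∀ ν, ∑ j, ct ν j * α j + δ ν ≤ 1) ∧ y = H *ᵥ α)
    {K0 K : ℕ} (hK0 : 0 < K0) (hKK0 : K0 ≤ K)
    (hslack : ∀ ν, (∑ j, |ct ν j|) * √(C / K / lam) ≤ δ ν) :
    ∃ U : Finset (m → ℝ),
      U.card ≤ min {k : ι → ℤ | ∑ j, |k j| ≤ (K0 : ℤ)}.ncard
        {k : ι → ℤ | ∑ j, |k j| ≤ (K : ℤ) ∧ ∀ ν, ∑ j, ct ν j * (k j : ℝ) ≤ (K : ℝ)}.ncard ∧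
      ∀ y ∈ T, ∃ u ∈ U, ∑ i, (y i - u i) ^ 2 ≤ C / K0 := by
  have hCK : C / K ≤ C / K0 :=
    div_le_div_of_nonneg_left hC (by exact_mod_cast hK0) (by exact_mod_cast hKK0)
  obtain ⟨U0, hU0, hcov0⟩ := exists_finset_card_le_ncard_of_forall_exists
      (R := fun y u : m → ℝ => ∑ i, (y i - u i) ^ 2 ≤ C / K0)
      (finite_setOf_sum_abs_le K0) (fun k => H *ᵥ fun j => (k j : ℝ) / K0) fun y hy => by
    obtain ⟨α, hα, -, rfl⟩ := hT y hy
    exact H.exists_int_sum_abs_le_sum_sq_mulVec_sub_le hC hH hα hK0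
  obtain ⟨U1, hU1, hcov1⟩ := exists_finset_card_le_ncard_of_forall_exists
      (R := fun y u : m → ℝ => ∑ i, (y i - u i) ^ 2 ≤ C / K0)
      ((finite_setOf_sum_abs_le K).sep _) (fun k => H *ᵥ fun j => (k j : ℝ) / K) fun y hy => by
    obtain ⟨α, hα, hcons, rfl⟩ := hT y hy
    obtain ⟨k, hk, hdist⟩ := H.exists_int_sum_abs_le_sum_mul_le_sum_sq_mulVec_sub_le hC hH
      hlam hquad hα hcons (hK0.trans_le hKK0) hslack
    exact ⟨k, hk, hdist.trans hCK⟩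
  rw [min_def]
  split_ifs
  exacts [⟨U0, hU0, hcov0⟩, ⟨U1, hU1, hcov1⟩]

end Covering

theorem covering_number_bound_general
    (n p V : ℕ) (hn : 1 ≤ n)
    (r : ℝ) (hr : 2 ≤ r) (q : ℝ) (hq : q = r / (r - 1))
    (Xb Bb : ℝ) (hXb : 0 < Xb) (hBb : 0 < Bb)
    (X : Matrix (Fin n) (Fin p) ℝ)
    (hrow : ∀ i, lpNorm r (X i) ≤ Xb)
    (hcolne : ∀ j, (fun i => X i j) ≠ 0)
    (ht : Fin p → Fin n → ℝ)
    (hht : ∀ j, ht j = fun i =>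
      ((n : ℝ) ^ (1 / r) * Xb * Bb / lpNorm r (fun i' => X i' j)) * X i j)
    (c : Fin V → Fin p → ℝ) (δ : Fin V → ℝ) (hδ : ∀ ν, 0 < δ ν)
    (ct : Fin V → Fin p → ℝ)
    (hct : ∀ ν j, ct ν j =
      c ν j * ((n : ℝ) ^ (1 / r) * Xb * Bb) / lpNorm r (fun i => X i j))
    (hctpos : ∀ ν, 0 < ∑ j, |ct ν j|)
    (Xt : Matrix (Fin n) (Fin p) ℝ) (hXt : ∀ i j, Xt i j = ht j i)
    (lam : ℝ) (hlam : 0 < lam)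
    (hquad : ∀ v : Fin p → ℝ, lam * ∑ j, (v j) ^ 2 ≤ ∑ i, (Xt.mulVec v i) ^ 2)
    (ε : ℝ) (hε0 : 0 < ε)
    (K0 K : ℕ) (hK0 : K0 = ⌈Xb ^ 2 * Bb ^ 2 / ε ^ 2⌉₊)
    (hK : K = max K0
        ⌈(n : ℝ) * Xb ^ 2 * Bb ^ 2 /
          (lam * (⨅ ν : Fin V, δ ν / ∑ j, |ct ν j|) ^ 2)⌉₊)
    (FS : Set (Fin n → ℝ))
    (hFS : FS = {y | ∃ β : Fin p → ℝ,
      (lpNorm q β ≤ Bb ∧ ∀ ν, ∑ j, c ν j * β j + δ ν ≤ 1) ∧ y = X.mulVec β}) :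
    (ε < Xb * Bb →
      ∃ U : Finset (Fin n → ℝ),
        U.card ≤ min ({k : Fin p → ℤ | (∑ j, |k j|) ≤ (K0 : ℤ)}.ncard)
          ({k : Fin p → ℤ | (∑ j, |k j|) ≤ (K : ℤ) ∧
            ∀ ν, ∑ j, ct ν j * (k j : ℝ) ≤ (K : ℝ)}.ncard) ∧
        ∀ y ∈ FS, ∃ u ∈ U, Real.sqrt (∑ i, (y i - u i) ^ 2) ≤ Real.sqrt n * ε) ∧
    (Xb * Bb ≤ ε →
      ∃ U : Finset (Fin n → ℝ), U.card = 1 ∧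
        ∀ y ∈ FS, ∃ u ∈ U, Real.sqrt (∑ i, (y i - u i) ^ 2) ≤ Real.sqrt n * ε) := by
  have hrq : r.HolderConjugate q := hq ▸ .conjExponent (by linarith)
  have hXt' : ∀ i j, Xt i j
      = (n : ℝ) ^ (1 / r) * Xb * Bb / lpNorm r (fun i' => X i' j) * X i j := fun i j => by
    rw [hXt, hht]
  have hsqrt : ∀ s, s ≤ n * ε ^ 2 → √s ≤ √n * ε := fun s hs => by
    rwa [Real.sqrt_le_left (by positivity), mul_pow, Real.sq_sqrt n.cast_nonneg]
  refine ⟨fun hε => ?_, fun hε => ⟨{0}, card_singleton _, ?_⟩⟩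
  · have hrep : ∀ y ∈ FS,
        ∃ α, ∑ j, |α j| ≤ 1 ∧ (∀ ν, ∑ j, ct ν j * α j + δ ν ≤ 1) ∧ y = Xt *ᵥ α := by
      rw [hFS]
      rintro y ⟨β, ⟨hβ, hcons⟩, rfl⟩
      obtain ⟨α, hα, hXα, hcα⟩ :=
        exists_sum_abs_le_one_mulVec_eq hn hrq hXb hBb hrow hcolne hXt' hct hβ
      exact ⟨α, hα, fun ν => hcα ν ▸ hcons ν, hXα⟩
    have hK0pos : 0 < K0 := hK0 ▸ Nat.ceil_pos.2 (by positivity)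
    obtain ⟨U, hU, hcov⟩ := Xt.exists_lattice_cover_of_sum_abs_le_one (by positivity)
      (sum_sq_col_le hr hcolne hXt') hlam hquad hrep hK0pos (hK ▸ le_max_left _ _)
      (mul_sqrt_le_of_natCeil_div_iInf_le hδ hctpos hlam (hK ▸ le_max_right _ _))
    refine ⟨U, hU, fun y hy => ?_⟩
    obtain ⟨u, hu, hdist⟩ := hcov y hy
    refine ⟨u, hu, hsqrt _ (hdist.trans ?_)⟩
    rw [mul_assoc, mul_div_assoc]
    exact mul_le_mul_of_nonneg_left
      (div_le_of_natCeil_div_le (by positivity) hK0.ge) n.cast_nonneg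
  · rw [hFS]
    rintro y ⟨β, ⟨hβ, -⟩, rfl⟩
    refine ⟨0, mem_singleton_self _, hsqrt _ ?_⟩
    have hbound := sum_sq_mulVec_le hrq X hrow hβ
    rw [Fintype.card_fin] at hbound
    simpa using hbound.trans
      (mul_le_mul_of_nonneg_left (pow_le_pow_left₀ (by positivity) hε 2) n.cast_nonneg)

/-- Theorem 3 of the paper (main covering-number bound): in the covering setup, the
`√n ε`-covering number (in Euclidean norm) of the restriction
`F|S = {Xβ : ‖β‖_q ≤ B_b, ∑_j c ν j β j + δ ν ≤ 1 ∀ν}` is at most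
`min{|P^{K₀}|, |P_c^{K}|}` when `ε < X_b B_b`, where `P^{K₀}` is the set of integer points
of the `ℓ₁` ball of radius `K₀ = ⌈X_b²B_b²/ε²⌉` and `P_c^{K}` additionally imposes the
scaled linear constraints `∑_j c̃ ν j k j ≤ K`; when `ε ≥ X_b B_b` a single point suffices. -/
theorem covering_number_bound
    (n p V : ℕ) (hn : 1 ≤ n) (hp : 1 ≤ p) (hV : 0 < V)
    (r : ℝ) (hr : 2 ≤ r) (q : ℝ) (hq : q = r / (r - 1))
    (Xb Bb : ℝ) (hXb : 0 < Xb) (hBb : 0 < Bb)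
    (X : Matrix (Fin n) (Fin p) ℝ)
    (hrow : ∀ i, lpNorm r (X i) ≤ Xb)
    (hcolne : ∀ j, (fun i => X i j) ≠ 0)
    (ht : Fin p → Fin n → ℝ)
    (hht : ∀ j, ht j = fun i =>
      ((n : ℝ) ^ (1 / r) * Xb * Bb / lpNorm r (fun i' => X i' j)) * X i j)
    (c : Fin V → Fin p → ℝ) (δ : Fin V → ℝ) (hδ : ∀ ν, 0 < δ ν)
    (ct : Fin V → Fin p → ℝ)
    (hct : ∀ ν j, ct ν j =
      c ν j * ((n : ℝ) ^ (1 / r) * Xb * Bb) / lpNorm r (fun i => X i j))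
    (hctpos : ∀ ν, 0 < ∑ j, |ct ν j|)
    (Xt : Matrix (Fin n) (Fin p) ℝ) (hXt : ∀ i j, Xt i j = ht j i)
    (lam : ℝ) (hlam : 0 < lam)
    (hquad : ∀ v : Fin p → ℝ, lam * ∑ j, (v j) ^ 2 ≤ ∑ i, (Xt.mulVec v i) ^ 2)
    (ε : ℝ) (hε0 : 0 < ε)
    (K0 K : ℕ) (hK0 : K0 = ⌈Xb ^ 2 * Bb ^ 2 / ε ^ 2⌉₊)
    (hK : K = max K0
        ⌈(n : ℝ) * Xb ^ 2 * Bb ^ 2 /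
          (lam * (⨅ ν : Fin V, δ ν / ∑ j, |ct ν j|) ^ 2)⌉₊)
    (FS : Set (Fin n → ℝ))
    (hFS : FS = {y | ∃ β : Fin p → ℝ,
      (lpNorm q β ≤ Bb ∧ ∀ ν, ∑ j, c ν j * β j + δ ν ≤ 1) ∧ y = X.mulVec β}) :
    (ε < Xb * Bb →
      ∃ U : Finset (Fin n → ℝ),
        U.card ≤ min ({k : Fin p → ℤ | (∑ j, |k j|) ≤ (K0 : ℤ)}.ncard)
          ({k : Fin p → ℤ | (∑ j, |k j|) ≤ (K : ℤ) ∧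
            ∀ ν, ∑ j, ct ν j * (k j : ℝ) ≤ (K : ℝ)}.ncard) ∧
        ∀ y ∈ FS, ∃ u ∈ U, Real.sqrt (∑ i, (y i - u i) ^ 2) ≤ Real.sqrt n * ε) ∧
    (Xb * Bb ≤ ε →
      ∃ U : Finset (Fin n → ℝ), U.card = 1 ∧
        ∀ y ∈ FS, ∃ u ∈ U, Real.sqrt (∑ i, (y i - u i) ^ 2) ≤ Real.sqrt n * ε) :=
  covering_number_bound_general n p V hn r hr q hq Xb Bb hXb hBb X hrow hcolne ht hht c δ hδ ct hct
    hctpos Xt hXt lam hlam hquad ε hε0 K0 K hK0 hK FS hFS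
end
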